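/- (Franzosa–Mischaikow) Let Δ and Δ' be <-upper triangular boundary maps on ⊕_{p∈P} C p and ⊕_{p∈P} C' p respectively, and let T : ⊕_{p∈P} C p → ⊕_{p∈P} C' p be <-upper triangular with T ∘ Δ = Δ' ∘ T. Then for every interval I ⊆ P one has T(I) ∘ Δ(I) = Δ'(I) ∘ T(I); that is, the collection {T(I)}_{I interval} consists of chain maps between the restricted complexes (⊕_{p∈I} C p, Δ(I)) and (⊕_{p∈I} C' p, Δ'(I)). -/
import Mathlib


/-- The `(p,q)` component (matrix entry) of a linear map between finite products
of modules: `C q →ₗ[R] C' p`. -/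
noncomputable def matEntry {R : Type*} [CommRing R] {P : Type*} [Fintype P] [DecidableEq P]
    {C : P → Type*} [∀ p, AddCommGroup (C p)] [∀ p, Module R (C p)]
    {C' : P → Type*} [∀ p, AddCommGroup (C' p)] [∀ p, Module R (C' p)]
    (T : ((p : P) → C p) →ₗ[R] ((p : P) → C' p)) (p q : P) : C q →ₗ[R] C' p :=
  (LinearMap.proj p).comp (T.comp (LinearMap.single R C q))

/-- `T` is `<`-upper triangular: `T(p,q) = 0` unless `p < q` or `p = q`. -/
def IsUpperTri {R : Type*} [CommRing R] {P : Type*} [Fintype P] [DecidableEq P]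
    {C : P → Type*} [∀ p, AddCommGroup (C p)] [∀ p, Module R (C p)]
    {C' : P → Type*} [∀ p, AddCommGroup (C' p)] [∀ p, Module R (C' p)]
    (lt : P → P → Prop)
    (T : ((p : P) → C p) →ₗ[R] ((p : P) → C' p)) : Prop :=
  ∀ p q, ¬ (lt p q ∨ p = q) → matEntry T p q = 0

/-- `T` is strictly `<`-upper triangular: `T(p,q) = 0` unless `p < q`. -/
def IsStrictUpperTri {R : Type*} [CommRing R] {P : Type*} [Fintype P] [DecidableEq P]
    {C : P → Type*} [∀ p, AddCommGroup (C p)] [∀ p, Module R (C p)]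
    {C' : P → Type*} [∀ p, AddCommGroup (C' p)] [∀ p, Module R (C' p)]
    (lt : P → P → Prop)
    (T : ((p : P) → C p) →ₗ[R] ((p : P) → C' p)) : Prop :=
  ∀ p q, ¬ lt p q → matEntry T p q = 0

/-- `I` is an interval for the order `lt`. -/
def IsOrderInterval {P : Type*} (lt : P → P → Prop) (I : Finset P) : Prop :=
  ∀ p ∈ I, ∀ q ∈ I, ∀ r, lt p r → lt r q → r ∈ I

/-- The restriction `T(I)` of `T` to an interval `I`, i.e. the map whose matrix of
components is `(T(p,q))_{p,q ∈ I}`. -/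
noncomputable def restrictTo {R : Type*} [CommRing R] {P : Type*} [Fintype P] [DecidableEq P]
    {C : P → Type*} [∀ p, AddCommGroup (C p)] [∀ p, Module R (C p)]
    {C' : P → Type*} [∀ p, AddCommGroup (C' p)] [∀ p, Module R (C' p)]
    (T : ((p : P) → C p) →ₗ[R] ((p : P) → C' p)) (I : Finset P) :
    ((p : I) → C p) →ₗ[R] ((p : I) → C' p) :=
  LinearMap.pi fun p => ∑ q : I, (matEntry T (p : P) (q : P)).comp (LinearMap.proj q)

section Aux

variable {R : Type*} [CommRing R] {P : Type*} [Fintype P] [DecidableEq P]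
    {C : P → Type*} [∀ p, AddCommGroup (C p)] [∀ p, Module R (C p)]
    {C' : P → Type*} [∀ p, AddCommGroup (C' p)] [∀ p, Module R (C' p)]
    {C'' : P → Type*} [∀ p, AddCommGroup (C'' p)] [∀ p, Module R (C'' p)]

lemma matEntry_ext {S S' : ((p : P) → C p) →ₗ[R] ((p : P) → C' p)}
    (h : ∀ p q, matEntry S p q = matEntry S' p q) : S = S' := by
  apply LinearMap.pi_ext'
  intro q
  apply LinearMap.ext; intro x
  funext p
  exact LinearMap.congr_fun (h p q) x

lemma matEntry_comp (A : ((p : P) → C' p) →ₗ[R] ((p : P) → C'' p))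
    (B : ((p : P) → C p) →ₗ[R] ((p : P) → C' p)) (p r : P) :
    matEntry (A.comp B) p r = ∑ q, (matEntry A p q).comp (matEntry B q r) := by
  apply LinearMap.ext; intro x
  show A (B (Pi.single r x)) p = _
  rw [← Finset.univ_sum_single (B (Pi.single r x)), map_sum]
  simp only [LinearMap.sum_apply, LinearMap.comp_apply, Finset.sum_apply]
  rfl

lemma matEntry_restrictTo (T : ((p : P) → C p) →ₗ[R] ((p : P) → C' p)) (I : Finset P)
    (p q : I) : matEntry (restrictTo T I) p q = matEntry T (p : P) (q : P) := by
  apply LinearMap.ext; intro x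
  show (∑ q' : I, (matEntry T (p : P) (q' : P)).comp (LinearMap.proj q')) (Pi.single q x) = _
  rw [LinearMap.sum_apply, Finset.sum_eq_single q]
  · simp
  · intro b _ hb
    simp [LinearMap.proj_apply, Pi.single_eq_of_ne hb]
  · simp

end Aux

/-- Franzosa–Mischaikow. If `Δ`, `Δ'` are `<`-upper triangular boundary
maps, `T` is `<`-upper triangular and `T ∘ Δ = Δ' ∘ T`, then for every interval `I`
one has `T(I) ∘ Δ(I) = Δ'(I) ∘ T(I)`, i.e. the restrictions are chain maps. -/
theorem restrictTo_chainMap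
    {R : Type*} [CommRing R] {P : Type*} [Fintype P] [DecidableEq P]
    (lt : P → P → Prop)
    (hirr : ∀ p, ¬ lt p p) (htrans : ∀ p q r, lt p q → lt q r → lt p r)
    {C : P → Type*} [∀ p, AddCommGroup (C p)] [∀ p, Module R (C p)]
    {C' : P → Type*} [∀ p, AddCommGroup (C' p)] [∀ p, Module R (C' p)]
    (Δ : ((p : P) → C p) →ₗ[R] ((p : P) → C p))
    (hΔ : IsStrictUpperTri lt Δ) (hΔΔ : Δ.comp Δ = 0)
    (Δ' : ((p : P) → C' p) →ₗ[R] ((p : P) → C' p))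
    (hΔ' : IsStrictUpperTri lt Δ') (hΔ'Δ' : Δ'.comp Δ' = 0)
    (T : ((p : P) → C p) →ₗ[R] ((p : P) → C' p))
    (hT : IsUpperTri lt T) (hcomm : T.comp Δ = Δ'.comp T)
    (I : Finset P) (hI : IsOrderInterval lt I) :
    (restrictTo T I).comp (restrictTo Δ I) = (restrictTo Δ' I).comp (restrictTo T I) := by
  apply matEntry_ext
  intro p r
  rw [matEntry_comp, matEntry_comp]
  simp only [matEntry_restrictTo]
  have key : ∀ q : P, q ∉ I →
      (matEntry T (p : P) q).comp (matEntry Δ q (r : P)) = 0 ∧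
      (matEntry Δ' (p : P) q).comp (matEntry T q (r : P)) = 0 := by
    intro q hq
    constructor
    · by_cases h1 : lt (p : P) q ∨ (p : P) = q
      · rcases h1 with h1 | h1
        · by_cases h2 : lt q (r : P)
          · exact absurd (hI p p.2 r r.2 q h1 h2) hq
          · rw [hΔ q r h2, LinearMap.comp_zero]
        · exact absurd (h1 ▸ p.2) hq
      · rw [hT p q h1, LinearMap.zero_comp]
    · by_cases h1 : lt q (r : P) ∨ q = (r : P)
      · rcases h1 with h1 | h1
        · by_cases h2 : lt (p : P) q
          · exact absurd (hI p p.2 r r.2 q h2 h1) hq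
          · rw [hΔ' p q h2, LinearMap.zero_comp]
        · exact absurd (h1 ▸ r.2) hq
      · rw [hT q r h1, LinearMap.comp_zero]
  have full : ∀ (f : P → (C (r : P) →ₗ[R] C' (p : P))), (∀ q ∉ I, f q = 0) →
      ∑ q : I, f (q : P) = ∑ q : P, f q := by
    intro f hf
    rw [Finset.sum_coe_sort I f]
    exact Finset.sum_subset (Finset.subset_univ I) (fun x _ hx => hf x hx)
  rw [full _ (fun q hq => (key q hq).1), full _ (fun q hq => (key q hq).2),
    ← matEntry_comp, ← matEntry_comp, hcomm]
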